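/- Let Z be a random variable whose cumulant generating function is log E[e^{zZ}] = Σ_{k=1}^n [log Γ(βk/2 + z) − log Γ(βk/2)] (Ginibre-type structure, up to the first cumulant) with β ∈ {1, 2, 4}. Then for j ≥ 2, Γ_j(Z) = Σ_{k=1}^n ψ^(j−1)(βk/2), and for β = 2 and j ≥ 3 one has |Γ_j(Z)| ≤ (j−2)! ζ(j−1) + (j−1)! ζ(j), independent of n. -/

import Mathlib

open MeasureTheory ProbabilityTheory

/-- The `j`-th cumulant of a real random variable `X`, defined as the `j`-th derivative
at `0` of the cumulant generating function `t ↦ log E[exp (t X)]`. -/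
noncomputable def cumulant {Ω : Type*} [MeasurableSpace Ω] (X : Ω → ℝ) (μ : Measure Ω)
    (j : ℕ) : ℝ :=
  iteratedDeriv j (fun t => cgf X μ t) 0

/-- The polygamma function of order `j`: the `(j+1)`-st derivative of `log ∘ Γ`. -/
noncomputable def polygamma (j : ℕ) (z : ℝ) : ℝ :=
  iteratedDeriv (j + 1) (fun x => Real.log (Real.Gamma x)) z

/-- Real Riemann zeta values `ζ(s) = ∑_{k ≥ 1} 1/k^s`. -/
noncomputable def zetaR (s : ℕ) : ℝ := ∑' k : ℕ, 1 / ((k : ℝ) + 1) ^ s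

/-!
By Gauss's limit, `log Γ x = lim (x log N + log N! - ∑_{m ≤ N} log (x + m))`, and the
derivatives of these approximants converge locally uniformly on `(0, ∞)`. This gives the digamma
series `ψ x = -γ - 1/x + ∑ₖ (1/(k+1) - 1/(x+k+1))`, and termwise differentiation gives
`ψ⁽ᵐ⁾ x = (-1)^(m+1) m! ∑ᵢ (x+i)^-(m+1)` for `m ≥ 1`. Near `0` the cumulant generating function
is a finite sum of shifted `log Γ`, so its derivatives at `0` are sums of polygamma values.
For the bound, split off the `i = 0` term of the series and compare the rest with a telescoping
sum: `q (a+1)^-(q+1) ≤ a^-q - (a+1)^-q` by Bernoulli's inequality, so that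
`|ψ⁽ᵐ⁾ k| ≤ (m-1)!/k^m + m!/k^(m+1)`; summing over `k` gives the zeta values.
-/

open Real Filter Topology Set
open scoped ContDiff Nat

theorem contDiffAt_Gamma_of_pos {x : ℝ} (hx : 0 < x) : ContDiffAt ℝ ω Gamma x := by
  have hΓ : AnalyticOnNhd ℂ Complex.Gamma {s : ℂ | 0 < s.re} :=
    DifferentiableOn.analyticOnNhd (fun s hs => (Complex.differentiableAt_Gamma s fun m h => by
      simp only [h, mem_ofPred_eq, Complex.neg_re, Complex.natCast_re] at hs
      linarith [(m.cast_nonneg : (0 : ℝ) ≤ m)]).differentiableWithinAt)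
      (isOpen_lt continuous_const Complex.continuous_re)
  have hre : ContDiffAt ℝ ω (fun y : ℝ => (Complex.Gamma y).re) x :=
    Complex.reCLM.contDiff.contDiffAt.comp x
      (((hΓ x (by simpa using hx)).contDiffAt.restrict_scalars ℝ).comp x
        Complex.ofRealCLM.contDiff.contDiffAt)
  simpa only [Complex.Gamma_ofReal, Complex.ofReal_re] using hre

theorem contDiffAt_log_Gamma {x : ℝ} (hx : 0 < x) :
    ContDiffAt ℝ ω (fun y => log (Gamma y)) x :=
  (contDiffAt_Gamma_of_pos hx).log (Gamma_pos_of_pos hx).ne'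

theorem iteratedDeriv_sum_comp_const_add_sub {𝕜 F ι : Type*} [NontriviallyNormedField 𝕜]
    [NormedAddCommGroup F] [NormedSpace 𝕜 F] (s : Finset ι) (f : 𝕜 → F) (c : ι → 𝕜)
    (d : ι → F) {j : ℕ} (hj : 0 < j) {z : 𝕜} (hf : ∀ i ∈ s, ContDiffAt 𝕜 j f (c i + z)) :
    iteratedDeriv j (fun z => ∑ i ∈ s, (f (c i + z) - d i)) z =
      ∑ i ∈ s, iteratedDeriv j f (c i + z) := by
  rw [iteratedDeriv_fun_sum (f := fun i z => f (c i + z) - d i) fun i hi =>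
    ((hf i hi).comp z (contDiffAt_const.add contDiffAt_id)).sub contDiffAt_const]
  refine Finset.sum_congr rfl fun i _ => ?_
  simp only [sub_eq_neg_add (f _), iteratedDeriv_const_add hj, iteratedDeriv_comp_const_add]

theorem cumulant_eq_sum_polygamma {Ω ι : Type*} [MeasurableSpace Ω] {X : Ω → ℝ}
    {μ : Measure Ω} (s : Finset ι) {c : ι → ℝ} (hc : ∀ i ∈ s, 0 < c i)
    (hX : cgf X μ =ᶠ[𝓝 0] fun z => ∑ i ∈ s, (log (Gamma (c i + z)) - log (Gamma (c i))))
    (j : ℕ) : cumulant X μ (j + 1) = ∑ i ∈ s, polygamma j (c i) := by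
  rw [cumulant, hX.iteratedDeriv_eq,
    iteratedDeriv_sum_comp_const_add_sub _ (fun x => log (Gamma x)) _ _ j.add_one_pos]
  · simp only [add_zero, polygamma]
  · intro i hi
    exact (contDiffAt_log_Gamma (by simpa using hc i hi)).of_le le_top

theorem summable_inv_add_pow (x : ℝ) {p : ℕ} (hp : 2 ≤ p) :
    Summable fun i : ℕ => ((x + i) ^ p)⁻¹ := by
  refine Summable.of_norm (((summable_one_div_nat_add_rpow x p).2 (by exact_mod_cast hp)).congr
    fun i => ?_)
  rw [rpow_natCast, norm_inv, norm_pow, norm_eq_abs, one_div, add_comm]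

noncomputable def digammaSeries (x : ℝ) : ℝ :=
  -eulerMascheroniConstant - x⁻¹ + ∑' k : ℕ, (((k : ℝ) + 1)⁻¹ - (x + k + 1)⁻¹)

noncomputable def digammaSeq (y : ℝ) (N : ℕ) : ℝ :=
  log N - harmonic N - y⁻¹ + ∑ k ∈ Finset.range N, (((k : ℝ) + 1)⁻¹ - (y + k + 1)⁻¹)

theorem hasDerivAt_logGammaSeq (N : ℕ) {y : ℝ} (hy : 0 < y) :
    HasDerivAt (BohrMollerup.logGammaSeq · N) (digammaSeq y N) y := by
  have hlog : HasDerivAt (fun y => ∑ m ∈ Finset.range (N + 1), log (y + m))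
      (∑ m ∈ Finset.range (N + 1), (y + m)⁻¹) y :=
    .fun_sum fun m _ => ((hasDerivAt_id y).add_const _).log (by positivity) |>.congr_deriv
      (one_div _)
  refine (((hasDerivAt_mul_const (log N)).add_const (log (N ! : ℝ))).sub hlog).congr_deriv ?_
  rw [digammaSeq, Finset.sum_range_succ', harmonic, Finset.sum_sub_distrib]
  push_cast
  simp only [add_zero, add_assoc]
  ring

theorem norm_inv_add_one_sub_inv_le {y : ℝ} (hy : 0 ≤ y) (k : ℕ) :
    ‖((k : ℝ) + 1)⁻¹ - (y + k + 1)⁻¹‖ ≤ y * ((1 + (k : ℝ)) ^ 2)⁻¹ := by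
  have hk : (0 : ℝ) < k + 1 := by positivity
  rw [inv_sub_inv hk.ne' (by positivity), add_sub_add_right_eq_sub, add_sub_cancel_right,
    norm_div, norm_mul, norm_of_nonneg hy, norm_of_nonneg hk.le,
    norm_of_nonneg (by positivity : 0 ≤ y + k + 1), div_eq_mul_inv]
  gcongr
  nlinarith

theorem tendstoUniformlyOn_digammaSeq (b : ℝ) :
    TendstoUniformlyOn (fun N y => digammaSeq y N) digammaSeries atTop (Ioo 0 b) := by
  have hconst : TendstoUniformlyOn (fun (N : ℕ) (_ : ℝ) => log N - harmonic N)
      (fun _ => -eulerMascheroniConstant) atTop (Ioo 0 b) :=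
    Tendsto.tendstoUniformlyOn_const (by simpa using tendsto_harmonic_sub_log.neg) _
  have hinv : TendstoUniformlyOn (fun (_ : ℕ) (y : ℝ) => y⁻¹) (fun y => y⁻¹) atTop (Ioo 0 b) :=
    Metric.tendstoUniformlyOn_iff.2 fun ε hε => .of_forall fun _ _ _ => by simpa using hε
  have hseries := tendstoUniformlyOn_tsum_nat (s := Ioo 0 b)
    (f := fun k (y : ℝ) => ((k : ℝ) + 1)⁻¹ - (y + k + 1)⁻¹)
    ((summable_inv_add_pow 1 le_rfl).mul_left b) fun k y hy =>
      (norm_inv_add_one_sub_inv_le hy.1.le k).trans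
        (mul_le_mul_of_nonneg_right hy.2.le (by positivity))
  exact (hconst.sub hinv).add hseries

theorem hasDerivAt_log_Gamma {x : ℝ} (hx : 0 < x) :
    HasDerivAt (fun y => log (Gamma y)) (digammaSeries x) x :=
  hasDerivAt_of_tendstoUniformlyOn isOpen_Ioo (tendstoUniformlyOn_digammaSeq (x + 1))
    (.of_forall fun N _ hy => hasDerivAt_logGammaSeq N hy.1)
    (fun _ hy => BohrMollerup.tendsto_log_gamma hy.1) ⟨hx, lt_add_one x⟩

theorem polygamma_zero_eq_digammaSeries {x : ℝ} (hx : 0 < x) :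
    polygamma 0 x = digammaSeries x := by
  rw [polygamma, iteratedDeriv_one, (hasDerivAt_log_Gamma hx).deriv]

theorem polygamma_succ (m : ℕ) (x : ℝ) : polygamma (m + 1) x = deriv (polygamma m) x := by
  rw [polygamma, iteratedDeriv_succ]
  rfl

theorem hasDerivAt_inv_add_pow (p : ℕ) {c y : ℝ} (h : y + c ≠ 0) :
    HasDerivAt (fun y => ((y + c) ^ p)⁻¹) (-p * ((y + c) ^ (p + 1))⁻¹) y := by
  refine (((hasDerivAt_id y).add_const c).fun_pow p).fun_inv (pow_ne_zero _ h) |>.congr_deriv ?_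
  simp only [id_eq]
  rcases p with _ | p
  · simp
  · simp only [Nat.add_sub_cancel]
    field_simp
    ring

theorem hasDerivAt_tsum_inv_add_pow {p : ℕ} (hp : 2 ≤ p) {x : ℝ} (hx : 0 < x) :
    HasDerivAt (fun y : ℝ => ∑' i : ℕ, ((y + i) ^ p)⁻¹)
      (-p * ∑' i : ℕ, ((x + i) ^ (p + 1))⁻¹) x := by
  rw [← tsum_mul_left]
  refine hasDerivAt_tsum_of_isPreconnected (t := Ioi (x / 2))
    ((summable_inv_add_pow (x / 2) (by omega : 2 ≤ p + 1)).mul_left (p : ℝ)) isOpen_Ioi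
    isPreconnected_Ioi
    (fun i y hy => hasDerivAt_inv_add_pow p (by have := (half_pos hx).trans hy; positivity))
    (fun i y (hy : x / 2 < y) => ?_) (mem_Ioi.2 (half_lt_self hx)) (summable_inv_add_pow x hp)
    (mem_Ioi.2 (half_lt_self hx))
  have hyi : 0 < y + i := by linarith [half_pos hx, (i.cast_nonneg : (0 : ℝ) ≤ i)]
  rw [norm_mul, norm_neg, norm_natCast, norm_inv, norm_pow, norm_of_nonneg hyi.le]
  gcongr

theorem hasDerivAt_digammaSeries {x : ℝ} (hx : 0 < x) :
    HasDerivAt digammaSeries (∑' i : ℕ, ((x + i) ^ 2)⁻¹) x := by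
  have hseries : HasDerivAt (fun y : ℝ => ∑' k : ℕ, (((k : ℝ) + 1)⁻¹ - (y + k + 1)⁻¹))
      (∑' k : ℕ, ((x + k + 1) ^ 2)⁻¹) x := by
    refine hasDerivAt_tsum_of_isPreconnected (t := Ioi (x / 2))
      (g' := fun (k : ℕ) (y : ℝ) => ((y + k + 1) ^ 2)⁻¹) (summable_inv_add_pow (x / 2 + 1) le_rfl)
      isOpen_Ioi isPreconnected_Ioi (fun k y (hy : x / 2 < y) => ?_)
      (fun k y (hy : x / 2 < y) => ?_) (mem_Ioi.2 (half_lt_self hx)) ?_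
      (mem_Ioi.2 (half_lt_self hx))
    · have hyk : y + (k + 1) ≠ 0 := by linarith [half_pos hx, (k.cast_nonneg : (0 : ℝ) ≤ k)]
      simpa [add_assoc, neg_div] using
        (((hasDerivAt_id y).add_const ((k : ℝ) + 1)).inv hyk).const_sub ((k : ℝ) + 1)⁻¹
    · have hk : 0 < x / 2 + 1 + k := by positivity
      rw [norm_inv, norm_pow, norm_of_nonneg (by linarith)]
      exact inv_anti₀ (by positivity) (pow_le_pow_left₀ hk.le (by linarith) 2)
    · exact .of_norm_bounded ((summable_inv_add_pow 1 le_rfl).mul_left x)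
        (norm_inv_add_one_sub_inv_le hx.le)
  have hinv : HasDerivAt (fun y => -eulerMascheroniConstant - y⁻¹) (x ^ 2)⁻¹ x := by
    simpa using (hasDerivAt_inv hx.ne').const_sub (-eulerMascheroniConstant)
  refine (hinv.add hseries).congr_deriv ?_
  rw [(summable_inv_add_pow x le_rfl).tsum_eq_zero_add]
  push_cast
  simp only [add_zero, add_assoc]

theorem polygamma_eq_tsum {m : ℕ} (hm : 1 ≤ m) {x : ℝ} (hx : 0 < x) :
    polygamma m x = (-1) ^ (m + 1) * m ! * ∑' i : ℕ, ((x + i) ^ (m + 1))⁻¹ := by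
  induction m, hm using Nat.le_induction generalizing x with
  | base =>
    have h : polygamma 0 =ᶠ[𝓝 x] digammaSeries :=
      eventually_gt_nhds hx |>.mono fun y hy => polygamma_zero_eq_digammaSeries hy
    rw [polygamma_succ, h.deriv_eq, (hasDerivAt_digammaSeries hx).deriv]
    norm_num
  | succ m hm ih =>
    have h : polygamma m =ᶠ[𝓝 x]
        fun y => (-1) ^ (m + 1) * m ! * ∑' i : ℕ, ((y + i) ^ (m + 1))⁻¹ :=
      eventually_gt_nhds hx |>.mono fun y hy => ih hy
    rw [polygamma_succ, h.deriv_eq,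
      ((hasDerivAt_tsum_inv_add_pow (by omega) hx).const_mul _).deriv, Nat.factorial_succ]
    push_cast
    ring

theorem mul_inv_add_one_pow_le_sub {a : ℝ} (ha : 0 < a) (q : ℕ) :
    q * ((a + 1) ^ (q + 1))⁻¹ ≤ (a ^ q)⁻¹ - ((a + 1) ^ q)⁻¹ := by
  have hBernoulli : 1 + q * a⁻¹ ≤ (1 + a⁻¹) ^ q :=
    one_add_mul_le_pow (by linarith [inv_pos.2 ha]) q
  calc (q : ℝ) * ((a + 1) ^ (q + 1))⁻¹ = q * (a + 1)⁻¹ * ((a + 1) ^ q)⁻¹ := by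
        rw [pow_succ, mul_inv]; ring
    _ ≤ q * a⁻¹ * ((a + 1) ^ q)⁻¹ := by gcongr; linarith
    _ ≤ ((1 + a⁻¹) ^ q - 1) * ((a + 1) ^ q)⁻¹ := by gcongr; linarith
    _ = (a ^ q)⁻¹ - ((a + 1) ^ q)⁻¹ := by
        rw [show 1 + a⁻¹ = (a + 1) / a by field_simp, div_pow]
        field_simp

theorem mul_tsum_inv_add_pow_le {x : ℝ} (hx : 0 < x) (q : ℕ) :
    q * ∑' i : ℕ, ((x + i + 1) ^ (q + 1))⁻¹ ≤ (x ^ q)⁻¹ := by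
  rw [← tsum_mul_left]
  refine tsum_le_of_sum_range_le (fun i => by positivity) fun N => ?_
  calc ∑ i ∈ Finset.range N, q * ((x + i + 1) ^ (q + 1))⁻¹
      ≤ ∑ i ∈ Finset.range N, (((x + i) ^ q)⁻¹ - ((x + (i + 1 : ℕ)) ^ q)⁻¹) :=
        Finset.sum_le_sum fun i _ => by
          push_cast
          rw [← add_assoc]
          exact mul_inv_add_one_pow_le_sub (by positivity) q
    _ = (x ^ q)⁻¹ - ((x + N) ^ q)⁻¹ := by rw [Finset.sum_range_sub']; simp
    _ ≤ (x ^ q)⁻¹ := sub_le_self _ (by positivity)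

theorem abs_polygamma_le {m : ℕ} (hm : 1 ≤ m) {x : ℝ} (hx : 0 < x) :
    |polygamma m x| ≤ (m - 1)! * (x ^ m)⁻¹ + m ! * (x ^ (m + 1))⁻¹ := by
  have hsplit : ∑' i : ℕ, ((x + i) ^ (m + 1))⁻¹ =
      (x ^ (m + 1))⁻¹ + ∑' i : ℕ, ((x + i + 1) ^ (m + 1))⁻¹ := by
    rw [(summable_inv_add_pow x (by omega)).tsum_eq_zero_add]
    push_cast
    simp only [add_zero, add_assoc]
  have htail := mul_le_mul_of_nonneg_left (mul_tsum_inv_add_pow_le hx m)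
    (Nat.cast_nonneg (m - 1)! : (0 : ℝ) ≤ (m - 1)!)
  rw [polygamma_eq_tsum hm hx, abs_mul, abs_mul, abs_pow, abs_neg, abs_one, one_pow, one_mul,
    Nat.abs_cast, abs_of_nonneg (tsum_nonneg fun i => by positivity), hsplit,
    ← Nat.mul_factorial_pred (by omega : m ≠ 0)]
  push_cast
  linarith

theorem sum_Icc_inv_pow_le_zetaR (n : ℕ) {s : ℕ} (hs : 2 ≤ s) :
    ∑ k ∈ Finset.Icc 1 n, ((k : ℝ) ^ s)⁻¹ ≤ zetaR s := by
  have hsum : Summable fun k : ℕ => ((k : ℝ) ^ s)⁻¹ := summable_nat_pow_inv.2 (by omega)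
  calc _ ≤ ∑' k : ℕ, ((k : ℝ) ^ s)⁻¹ := hsum.sum_le_tsum _ fun k _ => by positivity
    _ = zetaR s := by
      rw [hsum.tsum_eq_zero_add]
      simp [zetaR, zero_pow (by omega : s ≠ 0)]

theorem abs_sum_polygamma_le (n : ℕ) {m : ℕ} (hm : 2 ≤ m) :
    |∑ k ∈ Finset.Icc 1 n, polygamma m k| ≤ (m - 1)! * zetaR m + m ! * zetaR (m + 1) := by
  calc _ ≤ ∑ k ∈ Finset.Icc 1 n, |polygamma m k| := Finset.abs_sum_le_sum_abs _ _
    _ ≤ ∑ k ∈ Finset.Icc 1 n, ((m - 1)! * ((k : ℝ) ^ m)⁻¹ + m ! * ((k : ℝ) ^ (m + 1))⁻¹) :=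
      Finset.sum_le_sum fun k hk => abs_polygamma_le (by omega)
        (by exact_mod_cast (Finset.mem_Icc.1 hk).1)
    _ = (m - 1)! * ∑ k ∈ Finset.Icc 1 n, ((k : ℝ) ^ m)⁻¹ +
          m ! * ∑ k ∈ Finset.Icc 1 n, ((k : ℝ) ^ (m + 1))⁻¹ := by
      rw [Finset.sum_add_distrib, Finset.mul_sum, Finset.mul_sum]
    _ ≤ _ := by gcongr <;> exact sum_Icc_inv_pow_le_zetaR n (by omega)

theorem ginibre_logdet_cumulants_general {Ω : Type*} [MeasurableSpace Ω]
    (μ : Measure Ω) (Z : Ω → ℝ)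
    (n : ℕ) (β : ℝ) (hβ : β = 1 ∨ β = 2 ∨ β = 4)
    (hcgf : ∀ z : ℝ, |z| < β / 2 →
      cgf Z μ z =
        ∑ k ∈ Finset.Icc 1 n,
          (Real.log (Real.Gamma (β * k / 2 + z)) - Real.log (Real.Gamma (β * k / 2)))) :
    (∀ j : ℕ, 2 ≤ j →
      cumulant Z μ j = ∑ k ∈ Finset.Icc 1 n, polygamma (j - 1) (β * k / 2)) ∧
    (β = 2 → ∀ j : ℕ, 3 ≤ j →
      |cumulant Z μ j| ≤
        ((j - 2).factorial : ℝ) * zetaR (j - 1) + ((j - 1).factorial : ℝ) * zetaR j) := by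
  have hβpos : 0 < β := by rcases hβ with rfl | rfl | rfl <;> norm_num
  have hcum (m : ℕ) : cumulant Z μ (m + 1) = ∑ k ∈ Finset.Icc 1 n, polygamma m (β * k / 2) :=
    cumulant_eq_sum_polygamma _ (fun k hk => by have := (Finset.mem_Icc.1 hk).1; positivity)
      (eventually_of_mem (Metric.ball_mem_nhds 0 (half_pos hβpos)) fun z hz =>
        hcgf z (by simpa using hz)) m
  refine ⟨fun j hj => ?_, fun hβ2 j hj => ?_⟩
  · obtain ⟨m, rfl⟩ : ∃ m, j = m + 1 := ⟨j - 1, by omega⟩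
    rw [hcum, Nat.add_sub_cancel]
  · obtain ⟨m, rfl⟩ : ∃ m, j = m + 1 := ⟨j - 1, by omega⟩
    rw [hcum, Nat.add_sub_cancel, show m + 1 - 2 = m - 1 by omega, hβ2]
    simp_rw [mul_div_cancel_left₀ _ (two_ne_zero' ℝ)]
    exact abs_sum_polygamma_le n (by omega)

theorem ginibre_logdet_cumulants {Ω : Type*} [MeasurableSpace Ω]
    (μ : Measure Ω) [IsProbabilityMeasure μ] (Z : Ω → ℝ)
    (n : ℕ) (β : ℝ) (hβ : β = 1 ∨ β = 2 ∨ β = 4)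
    (hcgf : ∀ z : ℝ, |z| < β / 2 →
      cgf Z μ z =
        ∑ k ∈ Finset.Icc 1 n,
          (Real.log (Real.Gamma (β * k / 2 + z)) - Real.log (Real.Gamma (β * k / 2)))) :
    (∀ j : ℕ, 2 ≤ j →
      cumulant Z μ j = ∑ k ∈ Finset.Icc 1 n, polygamma (j - 1) (β * k / 2)) ∧
    (β = 2 → ∀ j : ℕ, 3 ≤ j →
      |cumulant Z μ j| ≤
        ((j - 2).factorial : ℝ) * zetaR (j - 1) + ((j - 1).factorial : ℝ) * zetaR j) :=
  ginibre_logdet_cumulants_general μ Z n β hβ hcgf
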